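/- For t₀ > 0 and x₀ > 0, the function u(t) = t₀x₀ / (t·(t₀x₀·arctanh(√3/√(2t²+3)) - t₀x₀·arctanh(√3/√(2t₀²+3)) - 1)) solves the Riccati initial value problem du/dt = u·(√3/√(2t²+3)·u - 1/t), u(t₀) = x₀, on any interval containing t₀ on which the denominator is nonzero. -/

import Mathlib

/-- The inverse hyperbolic tangent, `arctanh x = (1/2)·log((1+x)/(1-x))`. -/
noncomputable def arctanh (x : ℝ) : ℝ := (1 / 2) * Real.log ((1 + x) / (1 - x))

/-- The explicit solution of the Riccati comparison equation with value `x₀` at time `t₀`. -/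
noncomputable def riccatiU (t₀ x₀ t : ℝ) : ℝ :=
  t₀ * x₀ /
    (t * (t₀ * x₀ * arctanh (Real.sqrt 3 / Real.sqrt (2 * t ^ 2 + 3)) -
      t₀ * x₀ * arctanh (Real.sqrt 3 / Real.sqrt (2 * t₀ ^ 2 + 3)) + 1))

/-!
Substituting `u = 1 / v` turns the Riccati equation `u' = u (g u - 1/t)` into the linear equation
`v' = v / t - g`, i.e. `(v / t)' = -g / t`. For `g t = √3 / √(2t² + 3)` the primitive of `-g / t`
is `arctanh (g t)`, because `1 - g² = 2t² / (2t² + 3)`; this gives `v = t (E t) / (t₀ x₀)` with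
`E` the bracket in the denominator of `riccatiU`.
-/

theorem hasDerivAt_arctanh {x : ℝ} (hx : |x| < 1) : HasDerivAt arctanh (1 - x ^ 2)⁻¹ x := by
  obtain ⟨hx₁, hx₂⟩ := abs_lt.mp hx
  have h₁ : 1 - x ≠ 0 := by linarith
  have h₂ : 1 + x ≠ 0 := by linarith
  have hquot : HasDerivAt (fun y : ℝ => (1 + y) / (1 - y))
      ((1 * (1 - x) - (1 + x) * -1) / (1 - x) ^ 2) x :=
    ((hasDerivAt_id x).const_add 1).div ((hasDerivAt_id x).const_sub 1) h₁
  refine ((hquot.log (div_ne_zero h₂ h₁)).const_mul (1 / 2 : ℝ)).congr_deriv ?_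
  rw [show 1 - x ^ 2 = (1 - x) * (1 + x) by ring]
  field_simp
  ring

theorem abs_sqrt_three_div_sqrt_lt_one {t : ℝ} (ht : t ≠ 0) :
    |√3 / √(2 * t ^ 2 + 3)| < 1 := by
  rw [abs_of_nonneg (by positivity), div_lt_one (by positivity)]
  exact Real.sqrt_lt_sqrt (by norm_num) (by nlinarith [sq_pos_of_ne_zero ht])

theorem hasDerivAt_sqrt_three_div_sqrt (t : ℝ) :
    HasDerivAt (fun s : ℝ => √3 / √(2 * s ^ 2 + 3))
      (-(2 * √3 * t) / √(2 * t ^ 2 + 3) ^ 3) t := by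
  have hpos : (0 : ℝ) < 2 * t ^ 2 + 3 := by positivity
  have hσ : 0 < √(2 * t ^ 2 + 3) := Real.sqrt_pos.mpr hpos
  have hσ' : HasDerivAt (fun s : ℝ => √(2 * s ^ 2 + 3))
      (2 * (2 * t) / (2 * √(2 * t ^ 2 + 3))) t := by
    refine HasDerivAt.sqrt ?_ hpos.ne'
    simpa using ((hasDerivAt_pow 2 t).const_mul 2).add_const 3
  refine ((hasDerivAt_const t √3).div hσ' hσ.ne').congr_deriv ?_
  field_simp
  ring

theorem hasDerivAt_arctanh_sqrt_three_div_sqrt {t : ℝ} (ht : t ≠ 0) :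
    HasDerivAt (fun s : ℝ => arctanh (√3 / √(2 * s ^ 2 + 3)))
      (-(√3 / √(2 * t ^ 2 + 3)) / t) t := by
  refine ((hasDerivAt_arctanh (abs_sqrt_three_div_sqrt_lt_one ht)).comp t
    (hasDerivAt_sqrt_three_div_sqrt t)).congr_deriv ?_
  have hpos : (0 : ℝ) < 2 * t ^ 2 + 3 := by positivity
  have hσ : 0 < √(2 * t ^ 2 + 3) := Real.sqrt_pos.mpr hpos
  have hone_sub : 1 - (√3 / √(2 * t ^ 2 + 3)) ^ 2 = 2 * t ^ 2 / √(2 * t ^ 2 + 3) ^ 2 := by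
    rw [div_pow, Real.sq_sqrt (by norm_num), Real.sq_sqrt hpos.le]
    field_simp
    ring
  rw [hone_sub]
  field_simp

theorem hasDerivAt_const_div_id_mul {E : ℝ → ℝ} {c g t : ℝ}
    (hE : HasDerivAt E (-(c * g / t)) t) (hE₀ : t * E t ≠ 0) :
    HasDerivAt (fun s => c / (s * E s)) (c / (t * E t) * (g * (c / (t * E t)) - 1 / t)) t := by
  refine ((hasDerivAt_const t c).div ((hasDerivAt_id' t).fun_mul hE) hE₀).congr_deriv ?_
  have ht : t ≠ 0 := left_ne_zero_of_mul hE₀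
  have hEt : E t ≠ 0 := right_ne_zero_of_mul hE₀
  field_simp
  ring

theorem riccatiU_self {t₀ : ℝ} (ht₀ : t₀ ≠ 0) (x₀ : ℝ) : riccatiU t₀ x₀ t₀ = x₀ := by
  rw [riccatiU, sub_self, zero_add, mul_one, mul_div_right_comm, div_self ht₀, one_mul]

theorem riccati_explicit_solution_general (t₀ x₀ : ℝ) (ht₀ : 0 < t₀) :
    riccatiU t₀ x₀ t₀ = x₀ ∧
    ∀ t > (0 : ℝ),
      t * (t₀ * x₀ * arctanh (Real.sqrt 3 / Real.sqrt (2 * t ^ 2 + 3)) -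
        t₀ * x₀ * arctanh (Real.sqrt 3 / Real.sqrt (2 * t₀ ^ 2 + 3)) + 1) ≠ 0 →
      HasDerivAt (riccatiU t₀ x₀)
        (riccatiU t₀ x₀ t * (Real.sqrt 3 / Real.sqrt (2 * t ^ 2 + 3) * riccatiU t₀ x₀ t - 1 / t)) t := by
  refine ⟨riccatiU_self ht₀.ne' x₀, fun t ht hden => ?_⟩
  have hE := (((hasDerivAt_arctanh_sqrt_three_div_sqrt ht.ne').const_mul (t₀ * x₀)).sub_const
    (t₀ * x₀ * arctanh (√3 / √(2 * t₀ ^ 2 + 3)))).add_const 1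
  exact hasDerivAt_const_div_id_mul (hE.congr_deriv (by ring)) hden

/-- The function `u(t) = t₀x₀/(t(t₀x₀·arctanh(√3/√(2t²+3)) - t₀x₀·arctanh(√3/√(2t₀²+3)) + 1))`
solves the Riccati initial value problem `du/dt = u(√3/√(2t²+3)·u - 1/t)`, `u(t₀) = x₀`,
wherever its denominator does not vanish. -/
theorem riccati_explicit_solution (t₀ x₀ : ℝ) (ht₀ : 0 < t₀) (hx₀ : 0 < x₀) :
    riccatiU t₀ x₀ t₀ = x₀ ∧
    ∀ t > (0 : ℝ),
      t * (t₀ * x₀ * arctanh (Real.sqrt 3 / Real.sqrt (2 * t ^ 2 + 3)) -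
        t₀ * x₀ * arctanh (Real.sqrt 3 / Real.sqrt (2 * t₀ ^ 2 + 3)) + 1) ≠ 0 →
      HasDerivAt (riccatiU t₀ x₀)
        (riccatiU t₀ x₀ t * (Real.sqrt 3 / Real.sqrt (2 * t ^ 2 + 3) * riccatiU t₀ x₀ t - 1 / t)) t :=
  riccati_explicit_solution_general t₀ x₀ ht₀
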